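/- Let (Ω, μ) be a probability space and let X₁, …, X_K : Ω → ℝ be random variables such that for every k, X_k(ω) > 0 for almost every ω, the function ω ↦ Real.log (X_k ω) is integrable, and the function ω ↦ Real.log (∑_{k=1}^K X_k ω) is integrable. Then ∫ log (∑_{k=1}^K X_k(ω)) dμ(ω) ≥ log (∑_{k=1}^K exp(∫ log X_k(ω) dμ(ω))). -/

import Mathlib

/-!
For any probability weights `w` on the index set, concavity of `log` gives pointwise
`∑ w k (log X k - log w k) ≤ log ∑ X k`; integrating, `∑ w k (E[log X k] - log w k)` is a lower
bound for `E[log ∑ X k]`. The best such bound is attained at the Gibbs weights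
`w k ∝ exp E[log X k]`, where it equals `log ∑ exp E[log X k]`.
-/

open MeasureTheory Real Finset

namespace Real

variable {ι : Type*} {s : Finset ι}

theorem sum_mul_log_sub_log_le_log_sum {w x : ι → ℝ} (hw : ∀ i ∈ s, 0 < w i)
    (hw₁ : ∑ i ∈ s, w i = 1) (hx : ∀ i ∈ s, 0 < x i) :
    ∑ i ∈ s, w i * (log (x i) - log (w i)) ≤ log (∑ i ∈ s, x i) := by
  have hsum : ∑ i ∈ s, w i • (x i / w i) = ∑ i ∈ s, x i :=
    sum_congr rfl fun i hi => by rw [smul_eq_mul, mul_div_cancel₀ _ (hw i hi).ne']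
  have hjensen := strictConcaveOn_log_Ioi.concaveOn.le_map_sum (fun i hi => (hw i hi).le) hw₁
    fun i hi => div_pos (hx i hi) (hw i hi)
  rw [hsum] at hjensen
  refine le_of_eq_of_le (sum_congr rfl fun i hi => ?_) hjensen
  rw [smul_eq_mul, log_div (hx i hi).ne' (hw i hi).ne']

theorem sum_gibbs_mul_sub_log_gibbs (hs : s.Nonempty) (a : ι → ℝ) :
    ∑ i ∈ s, (exp (a i) / ∑ j ∈ s, exp (a j)) *
        (a i - log (exp (a i) / ∑ j ∈ s, exp (a j))) = log (∑ j ∈ s, exp (a j)) := by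
  have hS : 0 < ∑ j ∈ s, exp (a j) := sum_pos (fun j _ => exp_pos _) hs
  simp only [log_div (exp_pos _).ne' hS.ne', log_exp, sub_sub_cancel]
  rw [← sum_mul, ← sum_div, div_self hS.ne', one_mul]

end Real

theorem MeasureTheory.sum_mul_integral_log_sub_log_le {Ω ι : Type*} [MeasurableSpace Ω]
    {μ : Measure Ω} [IsProbabilityMeasure μ] {s : Finset ι} {w : ι → ℝ} {X : ι → Ω → ℝ}
    (hw : ∀ i ∈ s, 0 < w i) (hw₁ : ∑ i ∈ s, w i = 1) (hpos : ∀ i ∈ s, ∀ᵐ ω ∂μ, 0 < X i ω)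
    (hint : ∀ i ∈ s, Integrable (fun ω => log (X i ω)) μ)
    (hsum : Integrable (fun ω => log (∑ i ∈ s, X i ω)) μ) :
    ∑ i ∈ s, w i * (∫ ω, log (X i ω) ∂μ - log (w i)) ≤ ∫ ω, log (∑ i ∈ s, X i ω) ∂μ := by
  have hint' : ∀ i ∈ s, Integrable (fun ω => w i * (log (X i ω) - log (w i))) μ :=
    fun i hi => ((hint i hi).sub (integrable_const _)).const_mul _
  calc ∑ i ∈ s, w i * (∫ ω, log (X i ω) ∂μ - log (w i))
      = ∫ ω, ∑ i ∈ s, w i * (log (X i ω) - log (w i)) ∂μ := by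
        rw [integral_finsetSum _ hint']
        refine sum_congr rfl fun i hi => ?_
        rw [integral_const_mul, integral_sub (hint i hi) (integrable_const _), integral_const,
          probReal_univ, one_smul]
    _ ≤ ∫ ω, log (∑ i ∈ s, X i ω) ∂μ := by
        refine integral_mono_ae (integrable_finsetSum _ hint') hsum ?_
        filter_upwards [(Filter.eventually_all_finset s).2 hpos] with ω hω
        exact sum_mul_log_sub_log_le_log_sum hw hw₁ hω

/-- Lemma 1 of the paper (Paisley et al. bound): for positive random variables
`X k` on a probability space, `E[log ∑ X k] ≥ log ∑ exp(E[log X k])`. -/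
theorem stmt_0 {Ω : Type*} [MeasurableSpace Ω] (μ : Measure Ω) [IsProbabilityMeasure μ]
    (K : ℕ) (X : Fin K → Ω → ℝ)
    (hpos : ∀ k, ∀ᵐ ω ∂μ, 0 < X k ω)
    (hint : ∀ k, Integrable (fun ω => Real.log (X k ω)) μ)
    (hsum : Integrable (fun ω => Real.log (∑ k, X k ω)) μ) :
    ∫ ω, Real.log (∑ k, X k ω) ∂μ ≥
      Real.log (∑ k, Real.exp (∫ ω, Real.log (X k ω) ∂μ)) := by
  rcases isEmpty_or_nonempty (Fin K) with hK | hK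
  · simp
  set a : Fin K → ℝ := fun k => ∫ ω, log (X k ω) ∂μ
  have hS : 0 < ∑ j, exp (a j) := sum_pos (fun j _ => exp_pos _) univ_nonempty
  have hw : ∀ k ∈ univ, 0 < exp (a k) / ∑ j, exp (a j) := fun k _ => div_pos (exp_pos _) hS
  have hw₁ : ∑ k, exp (a k) / ∑ j, exp (a j) = 1 := by rw [← sum_div, div_self hS.ne']
  rw [ge_iff_le, ← sum_gibbs_mul_sub_log_gibbs univ_nonempty a]
  exact sum_mul_integral_log_sub_log_le hw hw₁ (fun k _ => hpos k) (fun k _ => hint k) hsum
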